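/- Let q = 2^n. Then the number of triples (a,b,c) in F_q^3 with c^4 - a*b*c^3 + (a^2+b^2-3)*c^2 - a*b*c + 1 = 0 equals q^2 + 2 if n is even, and q^2 - 2q + 2 if n is odd. -/

import Mathlib

/-! In characteristic 2 the polynomial equals `(c a + b) (c a + c² b) + (c² + c + 1)²`. For
`c ∉ {0, 1}` the substitution `(a, b) ↦ (c a + b, c a + c² b)` is invertible, so the fibre over `c`
is the hyperbola `x y = (c² + c + 1)²` with `q - 1` points, or the cross `x y = 0` with `2 q - 1`
points when `c` is a primitive cube root of unity. The fibre over `c = 0` is empty and the one over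
`c = 1` is the line `a + b = 1`. Primitive cube roots of unity exist in `F_q` iff `3 ∣ q - 1`, i.e.
iff `n` is even, and then there are two of them. -/

open Finset

theorem Nat.card_subtype_prod_prod_eq_sum {α β γ : Type*} [Finite α] [Finite β] [Fintype γ]
    (P : α × β × γ → Prop) :
    Nat.card {v : α × β × γ // P v} = ∑ c : γ, Nat.card {p : α × β // P (p.1, p.2, c)} := by
  rw [← Nat.card_sigma]
  exact Nat.card_congr
    { toFun := fun v => ⟨v.1.2.2, (v.1.1, v.1.2.1), v.2⟩
      invFun := fun s => ⟨(s.2.1.1, s.2.1.2, s.1), s.2.2⟩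
      left_inv := fun _ => rfl
      right_inv := fun _ => rfl }

theorem three_dvd_two_pow_sub_one_iff (n : ℕ) : 3 ∣ 2 ^ n - 1 ↔ Even n := by
  obtain ⟨k, rfl | rfl⟩ := Nat.even_or_odd' n <;>
  · have h4 : 4 ^ k % 3 = 1 := by rw [Nat.pow_mod]; simp
    simp only [pow_succ, pow_mul, even_two_mul, Nat.not_even_two_mul_add_one, iff_true, iff_false]
    norm_num
    omega

section Field

variable {F : Type*} [Field F]

theorem card_subtype_linear_subst [Finite F] (P : F × F → Prop) {α β γ δ : F}
    (h : α * δ - β * γ ≠ 0) :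
    Nat.card {p : F × F // P (α * p.1 + β * p.2, γ * p.1 + δ * p.2)} =
      Nat.card {p : F × F // P p} := by
  have hD := inv_mul_cancel₀ h
  let e : F × F ≃ F × F :=
    { toFun := fun p => (α * p.1 + β * p.2, γ * p.1 + δ * p.2)
      invFun := fun q => ((α * δ - β * γ)⁻¹ * (δ * q.1 - β * q.2),
        (α * δ - β * γ)⁻¹ * (α * q.2 - γ * q.1))
      left_inv := fun p => by
        ext
        · linear_combination p.1 * hD
        · linear_combination p.2 * hD
      right_inv := fun q => by
        ext
        · linear_combination q.1 * hD
        · linear_combination q.2 * hD }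
  exact Nat.card_congr (e.subtypeEquiv fun _ => Iff.rfl)

theorem sq_add_self_add_one_eq_zero_iff (h3 : (3 : F) ≠ 0) (c : F) :
    c ^ 2 + c + 1 = 0 ↔ c ^ 3 = 1 ∧ c ≠ 1 := by
  constructor
  · intro hc
    refine ⟨by linear_combination (c - 1) * hc, ?_⟩
    rintro rfl
    exact h3 (by linear_combination hc)
  · rintro ⟨hc3, hc1⟩
    have : (c - 1) * (c ^ 2 + c + 1) = 0 := by linear_combination hc3
    exact (mul_eq_zero.mp this).resolve_left (sub_ne_zero.mpr hc1)

theorem Units.orderOf_eq_three_iff (h3 : (3 : F) ≠ 0) (u : Fˣ) :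
    orderOf u = 3 ↔ (u : F) ^ 2 + u + 1 = 0 := by
  rw [orderOf_eq_prime_iff, sq_add_self_add_one_eq_zero_iff h3]
  simp only [← Units.val_pow_eq_pow_val, Units.val_eq_one, ne_eq]

variable [Fintype F]

theorem card_add_eq (e : F) : Nat.card {p : F × F // p.1 + p.2 = e} = Fintype.card F := by
  rw [← Nat.card_eq_fintype_card]
  exact Nat.card_congr
    { toFun := fun p => p.1.1
      invFun := fun a => ⟨(a, e - a), add_sub_cancel a e⟩
      left_inv := fun ⟨⟨a, b⟩, h⟩ => by ext <;> simp [← h]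
      right_inv := fun _ => rfl }

theorem card_mul_eq_of_ne_zero {d : F} (hd : d ≠ 0) :
    Nat.card {p : F × F // p.1 * p.2 = d} = Fintype.card F - 1 := by
  rw [← Nat.card_eq_fintype_card, ← Nat.card_units]
  exact Nat.card_congr
    { toFun := fun p => Units.mk0 p.1.1 (left_ne_zero_of_mul (p.2.symm ▸ hd))
      invFun := fun u => ⟨(u, d / u), mul_div_cancel₀ d u.ne_zero⟩
      left_inv := fun ⟨⟨a, b⟩, h⟩ => by
        ext
        · rfl
        · simp [← h, left_ne_zero_of_mul (h.symm ▸ hd)]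
      right_inv := fun _ => Units.ext rfl }

theorem card_mul_eq_zero : Nat.card {p : F × F // p.1 * p.2 = 0} = 2 * Fintype.card F - 1 := by
  classical
  have hunion : ({p : F × F | p.1 * p.2 = 0} : Finset (F × F)) = {0} ×ˢ univ ∪ univ ×ˢ {0} := by
    ext ⟨a, b⟩; simp [@eq_comm F 0]
  have hinter : ({0} ×ˢ univ ∩ univ ×ˢ {0} : Finset (F × F)) = {(0, 0)} := by
    ext; simp [Prod.ext_iff, eq_comm]
  have h := card_union_add_card_inter ({0} ×ˢ univ) (univ ×ˢ {0} : Finset (F × F))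
  rw [← hunion, hinter] at h
  rw [Nat.card_eq_fintype_card, Fintype.card_subtype]
  simp only [card_product, card_singleton, card_univ, one_mul, mul_one] at h
  omega

theorem card_roots_sq_add_self_add_one (h3 : (3 : F) ≠ 0) :
    Nat.card {c : F // c ^ 2 + c + 1 = 0} = if 3 ∣ Fintype.card F - 1 then 2 else 0 := by
  classical
  have hunits : Nat.card {u : Fˣ // orderOf u = 3} = Nat.card {c : F // c ^ 2 + c + 1 = 0} := by
    refine Nat.card_eq_of_bijective (fun u => ⟨u.1, (Units.orderOf_eq_three_iff h3 _).1 u.2⟩)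
      ⟨fun u v h => Subtype.ext (Units.ext (congrArg Subtype.val h)), fun ⟨c, hc⟩ => ?_⟩
    have hc0 : c ≠ 0 := by rintro rfl; simp at hc
    exact ⟨⟨Units.mk0 c hc0, (Units.orderOf_eq_three_iff h3 _).2 hc⟩, rfl⟩
  have hcard : Fintype.card Fˣ = Fintype.card F - 1 := by
    simp [← Nat.card_eq_fintype_card, Nat.card_units]
  rw [← hunits, Nat.card_eq_fintype_card, Fintype.card_subtype]
  split_ifs with h
  · rw [IsCyclic.card_orderOf_eq_totient (hcard ▸ h), Nat.totient_prime Nat.prime_three]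
  · rw [card_eq_zero, filter_eq_empty_iff]
    exact fun u _ hu => h (hcard ▸ hu ▸ orderOf_dvd_card)

end Field

section CharTwo

def charVarietyPoly {R : Type*} [CommRing R] (a b c : R) : R :=
  c ^ 4 - a * b * c ^ 3 + (a ^ 2 + b ^ 2 - 3) * c ^ 2 - a * b * c + 1

theorem charVarietyPoly_eq_of_charTwo {R : Type*} [CommRing R] [CharP R 2] (a b c : R) :
    charVarietyPoly a b c = (c * a + b) * (c * a + c ^ 2 * b) + (c ^ 2 + c + 1) ^ 2 := by
  unfold charVarietyPoly
  linear_combination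
    (-a * b * c ^ 3 - 3 * c ^ 2 - a * b * c - c ^ 3 - c) * CharTwo.two_eq_zero (R := R)

theorem three_ne_zero_of_charTwo (R : Type*) [CommRing R] [Nontrivial R] [CharP R 2] :
    (3 : R) ≠ 0 := by
  rw [show (3 : R) = 1 + 2 by norm_num, CharTwo.two_eq_zero, add_zero]
  exact one_ne_zero

variable {F : Type*} [Field F] [Fintype F]

noncomputable def charVarietyFiberCard (c : F) : ℕ :=
  Nat.card {p : F × F // charVarietyPoly p.1 p.2 c = 0}

theorem charVarietyFiberCard_zero : charVarietyFiberCard (0 : F) = 0 := by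
  simp [charVarietyFiberCard, charVarietyPoly]

variable [CharP F 2]

theorem charVarietyFiberCard_one : charVarietyFiberCard (1 : F) = Fintype.card F := by
  rw [← card_add_eq 1]
  refine Nat.card_congr (Equiv.subtypeEquivRight fun p => ?_)
  rw [show charVarietyPoly p.1 p.2 (1 : F) = (p.1 + p.2 + 1) ^ 2 by
      unfold charVarietyPoly
      linear_combination (-2 * p.1 * p.2 - 1 - p.1 - p.2) * CharTwo.two_eq_zero (R := F),
    pow_eq_zero_iff two_ne_zero, CharTwo.add_eq_zero]

theorem charVarietyFiberCard_of_ne [DecidableEq F] {c : F} (hc0 : c ≠ 0) (hc1 : c ≠ 1) :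
    charVarietyFiberCard c =
      Fintype.card F - 1 + if c ^ 2 + c + 1 = 0 then Fintype.card F else 0 := by
  have hdet : c * c ^ 2 - 1 * c ≠ 0 := by
    rw [show c * c ^ 2 - 1 * c = c * (c - 1) ^ 2 by
      linear_combination (c ^ 2 - c) * CharTwo.two_eq_zero (R := F)]
    exact mul_ne_zero hc0 (pow_ne_zero 2 (sub_ne_zero.2 hc1))
  have hfactor : charVarietyFiberCard c = Nat.card {p : F × F //
      (c * p.1 + 1 * p.2) * (c * p.1 + c ^ 2 * p.2) = (c ^ 2 + c + 1) ^ 2} :=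
    Nat.card_congr (Equiv.subtypeEquivRight fun p => by
      rw [one_mul, charVarietyPoly_eq_of_charTwo, CharTwo.add_eq_zero])
  rw [hfactor, card_subtype_linear_subst (fun p : F × F => p.1 * p.2 = (c ^ 2 + c + 1) ^ 2) hdet]
  split_ifs with hroot
  · rw [hroot, zero_pow two_ne_zero, card_mul_eq_zero]
    have := Fintype.card_pos (α := F)
    omega
  · rw [card_mul_eq_of_ne_zero (pow_ne_zero 2 hroot), add_zero]

theorem card_charVariety_of_charTwo :
    Nat.card {v : F × F × F // charVarietyPoly v.1 v.2.1 v.2.2 = 0} =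
      Fintype.card F + (Fintype.card F - 2) * (Fintype.card F - 1) +
        Fintype.card F * Nat.card {c : F // c ^ 2 + c + 1 = 0} := by
  classical
  rw [Nat.card_subtype_prod_prod_eq_sum]
  change ∑ c, charVarietyFiberCard c = _
  have h0 : (0 : F) ∈ univ.erase 1 := mem_erase.2 ⟨zero_ne_one, mem_univ 0⟩
  rw [← add_sum_erase _ _ (mem_univ 1), ← add_sum_erase _ _ h0, charVarietyFiberCard_one,
    charVarietyFiberCard_zero, zero_add]
  have hT : ∀ c ∈ (univ.erase (1 : F)).erase 0, c ≠ 0 ∧ c ≠ 1 := fun c hc => by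
    simp only [mem_erase] at hc
    exact ⟨hc.1, hc.2.1⟩
  have hroots : #{c ∈ (univ.erase (1 : F)).erase 0 | c ^ 2 + c + 1 = 0} =
      Nat.card {c : F // c ^ 2 + c + 1 = 0} := by
    rw [Nat.card_eq_fintype_card, Fintype.card_subtype, filter_erase, filter_erase,
      erase_eq_of_notMem (by simp),
      erase_eq_of_notMem (by norm_num [three_ne_zero_of_charTwo F])]
  rw [sum_congr rfl fun c hc => charVarietyFiberCard_of_ne (hT c hc).1 (hT c hc).2,
    sum_add_distrib, sum_const, card_erase_of_mem h0, card_erase_of_mem (mem_univ _), card_univ,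
    smul_eq_mul, sum_ite, sum_const_zero, add_zero, sum_const, smul_eq_mul, hroots, Nat.sub_sub]
  ring

end CharTwo

theorem stmt_11_general (n : ℕ)
    (F : Type) [Field F] [Fintype F] (hF : Fintype.card F = 2 ^ n) :
    Nat.card {v : F × F × F //
      v.2.2 ^ 4 - v.1 * v.2.1 * v.2.2 ^ 3 + (v.1 ^ 2 + v.2.1 ^ 2 - 3) * v.2.2 ^ 2
        - v.1 * v.2.1 * v.2.2 + 1 = 0} =
      if Even n then (2 ^ n) ^ 2 + 2 else (2 ^ n) ^ 2 - 2 * 2 ^ n + 2 := by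
  have : CharP F 2 := charP_of_card_eq_prime_pow hF
  have hq : 2 ≤ 2 ^ n := hF ▸ Fintype.one_lt_card
  refine card_charVariety_of_charTwo.trans ?_
  rw [card_roots_sq_add_self_add_one (three_ne_zero_of_charTwo F), hF]
  simp only [three_dvd_two_pow_sub_one_iff]
  split_ifs
  · zify [hq, (by omega : 1 ≤ 2 ^ n)]
    ring
  · have : 2 * 2 ^ n ≤ (2 ^ n) ^ 2 := by nlinarith
    zify [hq, (by omega : 1 ≤ 2 ^ n), this]
    ring

theorem stmt_11 (n : ℕ) (hn : 0 < n)
    (F : Type) [Field F] [Fintype F] (hF : Fintype.card F = 2 ^ n) :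
    Nat.card {v : F × F × F //
      v.2.2 ^ 4 - v.1 * v.2.1 * v.2.2 ^ 3 + (v.1 ^ 2 + v.2.1 ^ 2 - 3) * v.2.2 ^ 2
        - v.1 * v.2.1 * v.2.2 + 1 = 0} =
      if Even n then (2 ^ n) ^ 2 + 2 else (2 ^ n) ^ 2 - 2 * 2 ^ n + 2 :=
  stmt_11_general n F hF
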